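/- Let a ≥ 0 and let f : B → X be holomorphic with f(0) = 0. Then f ∈ N_a (i.e., Re⟨f(x), x*⟩ ≥ a‖x‖² for all x ∈ B and x* ∈ J(x)) if and only if for every x ∈ B and every x* ∈ J(x), Re[ 2⟨f(x), x*⟩ + (1 − ‖x‖²)⟨f'(x)x, x*⟩ ] ≥ a‖x‖²(1 + ‖x‖²), where f'(x)x denotes the Fréchet derivative of f at x applied to the vector x. -/

import Mathlib

open Complex Metric

/-- The set `J(x)` of support functionals at `x`:
`{x* ∈ X* : ⟨x, x*⟩ = ‖x‖² = ‖x*‖²}`. -/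
def suppFun {X : Type*} [NormedAddCommGroup X] [NormedSpace ℂ X] (x : X) :
    Set (X →L[ℂ] ℂ) :=
  {φ | φ x = (‖x‖ : ℂ) ^ 2 ∧ ‖φ‖ = ‖x‖}

/-- The class `N_a`: holomorphic mappings `f` of the open unit ball with `f(0)=0` and
`Re⟨f(x), x*⟩ ≥ a‖x‖²` for all `x ∈ B`, `x* ∈ J(x)`. -/
def IsNa {X : Type*} [NormedAddCommGroup X] [NormedSpace ℂ X] (a : ℝ) (f : X → X) : Prop :=
  DifferentiableOn ℂ f (ball 0 1) ∧ f 0 = 0 ∧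
    ∀ x ∈ ball (0 : X) 1, ∀ φ ∈ suppFun x, a * ‖x‖ ^ 2 ≤ (φ (f x)).re

/-- `K_A(θ) = sup { Re (e^{-iθ} w) : w ∈ V(A) }`, the support function of the
numerical range `V(A) = {⟨Ax, x*⟩ : ‖x‖ = 1, x* ∈ J(x)}`. -/
noncomputable def KA {X : Type*} [NormedAddCommGroup X] [NormedSpace ℂ X]
    (A : X →L[ℂ] X) (θ : ℝ) : ℝ :=
  sSup {s : ℝ | ∃ x : X, ‖x‖ = 1 ∧ ∃ φ ∈ suppFun x,
    s = (Complex.exp (-(θ : ℂ) * Complex.I) * φ (A x)).re}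

/-!
Fix `x ≠ 0` and `φ ∈ J(x)` and write `x = ζ₀ u`, `φ = conj ζ₀ ψ` with `‖u‖ = 1`, `ψ ∈ J(u)`.
Since `conj ζ • ψ ∈ J(ζ u)` for every `ζ`, both conditions along the slice `ζ ↦ ζ u` become
conditions on the holomorphic function `p(ζ) = ψ(f(ζ u)) / ζ` of the unit disc: (i) reads
`Re p ≥ a`, and (iv) reads `(3 - |ζ|²) Re p + (1 - |ζ|²) Re (ζ p') ≥ a (1 + |ζ|²)`.

If `Re p ≥ a`, the Schwarz–Pick lemma for maps into a half-plane gives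
`|p'(ζ)| (1 - |ζ|²) ≤ 2 (Re p(ζ) - a)`, which together with `a ≥ 0` yields (iv).
Conversely, the minimum of `Re p` over `|ζ| ≤ ρ` is attained at some `|z₁| = ρ` where the
radial derivative `Re (z₁ p'(z₁))` is `≤ 0`, so (iv) at `z₁` gives
`(3 - ρ²) min Re p ≥ a (1 + ρ²)`; letting `ρ → 1` gives `Re p ≥ a`.
-/

open Set Filter Topology
open scoped ComplexConjugate

theorem normSq_add_conj_sub_normSq_sub (w c : ℂ) :
    normSq (w + conj c) - normSq (w - c) = 4 * w.re * c.re := by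
  simp only [normSq_apply, add_re, add_im, sub_re, sub_im, conj_re, conj_im]
  ring

theorem norm_sub_lt_norm_add_conj {w c : ℂ} (hw : 0 < w.re) (hc : 0 < c.re) :
    ‖w - c‖ < ‖w + conj c‖ := by
  rw [← sq_lt_sq₀ (norm_nonneg _) (norm_nonneg _), Complex.sq_norm, Complex.sq_norm]
  nlinarith [normSq_add_conj_sub_normSq_sub w c, mul_pos hw hc]

theorem normSq_one_add_conj_mul_sub_normSq_add (z₀ z : ℂ) :
    normSq (1 + conj z₀ * z) - normSq (z + z₀) = (1 - normSq z₀) * (1 - normSq z) := by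
  simp only [normSq_apply, add_re, add_im, mul_re, mul_im, one_re, one_im, conj_re, conj_im]
  ring

theorem norm_add_lt_norm_one_add_conj_mul {z₀ z : ℂ} (hz₀ : ‖z₀‖ < 1) (hz : ‖z‖ < 1) :
    ‖z + z₀‖ < ‖1 + conj z₀ * z‖ := by
  have h₀ : normSq z₀ < 1 := by rw [← Complex.sq_norm]; nlinarith [norm_nonneg z₀]
  have h : normSq z < 1 := by rw [← Complex.sq_norm]; nlinarith [norm_nonneg z]
  rw [← sq_lt_sq₀ (norm_nonneg _) (norm_nonneg _), Complex.sq_norm, Complex.sq_norm]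
  nlinarith [normSq_one_add_conj_mul_sub_normSq_add z₀ z, mul_pos (sub_pos.2 h₀) (sub_pos.2 h)]

theorem norm_deriv_zero_le_of_re_pos {g : ℂ → ℂ} (hg : DifferentiableOn ℂ g (ball 0 1))
    (hpos : ∀ z ∈ ball (0 : ℂ) 1, 0 < (g z).re) : ‖deriv g 0‖ ≤ 2 * (g 0).re := by
  set c := g 0
  have hc : 0 < c.re := hpos 0 (mem_ball_self one_pos)
  have hlt : ∀ z ∈ ball (0 : ℂ) 1, ‖g z - c‖ < ‖g z + conj c‖ := fun z hz =>
    norm_sub_lt_norm_add_conj (hpos z hz) hc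
  have hden : ∀ z ∈ ball (0 : ℂ) 1, g z + conj c ≠ 0 := fun z hz =>
    norm_pos_iff.mp ((norm_nonneg _).trans_lt (hlt z hz))
  -- the Cayley map of the half-plane `0 < re` onto the disc, normalized at `c`
  set F : ℂ → ℂ := fun z => (g z - c) / (g z + conj c)
  have hF0 : F 0 = 0 := by simp [F, c]
  have hmaps : MapsTo F (ball 0 1) (closedBall (F 0) 1) := fun z hz => by
    simpa [hF0, F, norm_div] using ((div_lt_one (norm_pos_iff.mpr (hden z hz))).2 (hlt z hz)).le
  have hschwarz := norm_deriv_le_div_of_mapsTo_ball (f := F)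
    ((hg.sub_const c).div (hg.add_const _) hden) hmaps one_pos
  have hderiv : HasDerivAt F (deriv g 0 / (c + conj c)) 0 := by
    have hg0 := (hg.differentiableAt (ball_mem_nhds 0 one_pos)).hasDerivAt
    have hden0 := hden 0 (mem_ball_self one_pos)
    refine ((hg0.sub_const c).div (hg0.add_const (conj c)) hden0).congr_deriv ?_
    simp only [c, sub_self, zero_mul, sub_zero] at hden0 ⊢
    field_simp
  rw [hderiv.deriv, norm_div, add_conj, Complex.norm_real, Real.norm_of_nonneg (by positivity),
    div_one, div_le_iff₀ (by positivity)] at hschwarz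
  linarith

theorem norm_deriv_zero_le_of_re_nonneg {g : ℂ → ℂ} (hg : DifferentiableOn ℂ g (ball 0 1))
    (hg_re : ∀ z ∈ ball (0 : ℂ) 1, 0 ≤ (g z).re) : ‖deriv g 0‖ ≤ 2 * (g 0).re := by
  refine le_of_forall_pos_le_add fun ε hε => ?_
  have := norm_deriv_zero_le_of_re_pos (g := fun z => g z + (ε / 2 : ℝ)) (hg.add_const _)
    fun z hz => by simpa using add_pos_of_nonneg_of_pos (hg_re z hz) (half_pos hε)
  simp only [deriv_add_const, add_re, ofReal_re] at this
  linarith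

theorem norm_deriv_mul_le_of_re_nonneg {g : ℂ → ℂ} (hg : DifferentiableOn ℂ g (ball 0 1))
    (hg_re : ∀ z ∈ ball (0 : ℂ) 1, 0 ≤ (g z).re) {z₀ : ℂ} (hz₀ : z₀ ∈ ball (0 : ℂ) 1) :
    ‖deriv g z₀‖ * (1 - ‖z₀‖ ^ 2) ≤ 2 * (g z₀).re := by
  rw [mem_ball_zero_iff] at hz₀
  set T : ℂ → ℂ := fun z => (z + z₀) / (1 + conj z₀ * z)
  have hlt : ∀ z ∈ ball (0 : ℂ) 1, ‖z + z₀‖ < ‖1 + conj z₀ * z‖ := fun z hz =>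
    norm_add_lt_norm_one_add_conj_mul hz₀ (mem_ball_zero_iff.mp hz)
  have hden : ∀ z ∈ ball (0 : ℂ) 1, 1 + conj z₀ * z ≠ 0 := fun z hz =>
    norm_pos_iff.mp ((norm_nonneg _).trans_lt (hlt z hz))
  have hT : MapsTo T (ball 0 1) (ball 0 1) := fun z hz => by
    simpa [T, norm_div] using (div_lt_one (norm_pos_iff.mpr (hden z hz))).2 (hlt z hz)
  have hT0 : T 0 = z₀ := by simp [T]
  have hTd : HasDerivAt T (1 - ‖z₀‖ ^ 2 : ℂ) 0 := by
    have hid := hasDerivAt_id (0 : ℂ)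
    refine ((hid.add_const z₀).div ((hid.const_mul (conj z₀)).const_add 1) (by simp)).congr_deriv ?_
    simp [← conj_mul']
    ring
  have hgz₀ := (hg.differentiableAt (isOpen_ball.mem_nhds (mem_ball_zero_iff.mpr hz₀))).hasDerivAt
  have hcomp : HasDerivAt (g ∘ T) (deriv g z₀ * (1 - ‖z₀‖ ^ 2 : ℂ)) 0 :=
    hgz₀.comp_of_eq 0 hTd hT0.symm
  have := norm_deriv_zero_le_of_re_nonneg (g := g ∘ T)
    (hg.comp ((differentiable_id.add_const z₀).differentiableOn.div
      ((differentiable_id.const_mul _).const_add 1).differentiableOn hden) hT)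
    fun z hz => hg_re _ (hT hz)
  rwa [hcomp.deriv, Function.comp_apply, hT0, norm_mul, ← ofReal_pow, ← ofReal_one, ← ofReal_sub,
    norm_real, Real.norm_of_nonneg (by nlinarith [norm_nonneg z₀])] at this

theorem mul_one_add_sq_le_of_le_re {a : ℝ} (ha : 0 ≤ a) {p : ℂ → ℂ}
    (hp : DifferentiableOn ℂ p (ball 0 1)) (hp_re : ∀ z ∈ ball (0 : ℂ) 1, a ≤ (p z).re)
    {z : ℂ} (hz : z ∈ ball (0 : ℂ) 1) :
    a * (1 + ‖z‖ ^ 2) ≤ (3 - ‖z‖ ^ 2) * (p z).re + (1 - ‖z‖ ^ 2) * (z * deriv p z).re := by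
  have hpick := norm_deriv_mul_le_of_re_nonneg (g := fun w => p w - a) (hp.sub_const _)
    (fun w hw => by simpa using hp_re w hw) hz
  simp only [deriv_sub_const, sub_re, ofReal_re] at hpick
  have hz1 : ‖z‖ < 1 := mem_ball_zero_iff.mp hz
  have hradial : -(‖z‖ * ‖deriv p z‖) ≤ (z * deriv p z).re := by
    simpa [norm_mul] using neg_le_of_abs_le (abs_re_le_norm (z * deriv p z))
  have hpz := hp_re z hz
  have h1 : 0 ≤ 1 - ‖z‖ ^ 2 := by nlinarith [norm_nonneg z]
  -- with `r = ‖z‖`, the right side minus the left is `≥ (1 - r)(3 + r)(Re p - a) + 2a(1 - r²)`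
  nlinarith [mul_le_mul_of_nonneg_left hradial h1, mul_le_mul_of_nonneg_left hpick (norm_nonneg z),
    mul_nonneg (mul_nonneg (sub_nonneg.2 hz1.le) (by linarith [norm_nonneg z] : (0:ℝ) ≤ 3 + ‖z‖))
      (sub_nonneg.2 hpz), mul_nonneg ha h1]

theorem exists_mem_sphere_isMinOn_re {p : ℂ → ℂ} {ρ : ℝ} (hρ : 0 < ρ)
    (hp : DiffContOnCl ℂ p (ball 0 ρ)) :
    ∃ z ∈ sphere (0 : ℂ) ρ, IsMinOn (fun w => (p w).re) (closedBall 0 ρ) z := by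
  obtain ⟨z, hz, hmax⟩ := Complex.exists_mem_frontier_isMaxOn_norm (f := fun w => exp (-p w))
    isBounded_ball (nonempty_ball.2 hρ) (differentiable_exp.comp_diffContOnCl hp.neg)
  rw [frontier_ball 0 hρ.ne'] at hz
  rw [closure_ball 0 hρ.ne'] at hmax
  refine ⟨z, hz, fun w hw => ?_⟩
  simpa [norm_exp] using hmax hw

theorem re_mul_deriv_nonpos_of_isMinOn {p : ℂ → ℂ} {z : ℂ} (hp : DifferentiableAt ℂ p z)
    (hmin : IsMinOn (fun w => (p w).re) (closedBall 0 ‖z‖) z) : (z * deriv p z).re ≤ 0 := by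
  have hderiv : HasFDerivAt (fun w => (p w).re)
      (reCLM.comp ((ContinuousLinearMap.smulRight 1 (deriv p z)).restrictScalars ℝ)) z :=
    reCLM.hasFDerivAt.comp z (hp.hasDerivAt.hasFDerivAt.restrictScalars ℝ)
  have hcone : 0 - z ∈ posTangentConeAt (closedBall (0 : ℂ) ‖z‖) z :=
    sub_mem_posTangentConeAt_of_segment_subset ((convex_closedBall 0 ‖z‖).segment_subset
      (by simp) (by simp))
  simpa [mul_comm z] using hmin.localize.hasFDerivWithinAt_nonneg hderiv.hasFDerivWithinAt hcone

theorem mul_one_add_sq_le_three_sub_sq_mul_re {a : ℝ} {p : ℂ → ℂ}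
    (hp : DifferentiableOn ℂ p (ball 0 1))
    (hp_rad : ∀ z ∈ ball (0 : ℂ) 1, z ≠ 0 →
      a * (1 + ‖z‖ ^ 2) ≤ (3 - ‖z‖ ^ 2) * (p z).re + (1 - ‖z‖ ^ 2) * (z * deriv p z).re)
    {z : ℂ} {ρ : ℝ} (hzρ : ‖z‖ < ρ) (hρ : ρ < 1) :
    a * (1 + ρ ^ 2) ≤ (3 - ρ ^ 2) * (p z).re := by
  have hρ0 : 0 < ρ := (norm_nonneg z).trans_lt hzρ
  have hsub : closedBall (0 : ℂ) ρ ⊆ ball 0 1 := closedBall_subset_ball hρ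
  obtain ⟨z₁, hz₁, hmin⟩ := exists_mem_sphere_isMinOn_re hρ0
    ((hp.mono hsub).diffContOnCl_ball subset_rfl)
  rw [mem_sphere_zero_iff_norm] at hz₁
  have hz₁b : z₁ ∈ ball (0 : ℂ) 1 := hsub (by simp [hz₁.le])
  have hrad := hp_rad z₁ hz₁b (norm_pos_iff.mp (hz₁ ▸ hρ0))
  have hnonpos := re_mul_deriv_nonpos_of_isMinOn
    (hp.differentiableAt (isOpen_ball.mem_nhds hz₁b)) (hz₁ ▸ hmin)
  have hle : (p z₁).re ≤ (p z).re := hmin (by simpa using hzρ.le)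
  rw [hz₁] at hrad
  nlinarith [mul_nonpos_of_nonneg_of_nonpos (by nlinarith : (0:ℝ) ≤ 1 - ρ ^ 2) hnonpos,
    mul_le_mul_of_nonneg_left hle (by nlinarith : (0:ℝ) ≤ 3 - ρ ^ 2)]

theorem le_re_of_mul_one_add_sq_le {a : ℝ} {p : ℂ → ℂ} (hp : DifferentiableOn ℂ p (ball 0 1))
    (hp_rad : ∀ z ∈ ball (0 : ℂ) 1, z ≠ 0 →
      a * (1 + ‖z‖ ^ 2) ≤ (3 - ‖z‖ ^ 2) * (p z).re + (1 - ‖z‖ ^ 2) * (z * deriv p z).re)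
    {z : ℂ} (hz : z ∈ ball (0 : ℂ) 1) : a ≤ (p z).re := by
  have hev : ∀ᶠ ρ in 𝓝[<] (1 : ℝ), 0 ≤ (3 - ρ ^ 2) * (p z).re - a * (1 + ρ ^ 2) := by
    filter_upwards [Ioo_mem_nhdsLT (mem_ball_zero_iff.mp hz)] with ρ hρ
    linarith [mul_one_add_sq_le_three_sub_sq_mul_re hp hp_rad hρ.1 hρ.2]
  have hcont : Continuous fun ρ : ℝ => (3 - ρ ^ 2) * (p z).re - a * (1 + ρ ^ 2) := by fun_prop
  have := ge_of_tendsto ((hcont.tendsto 1).mono_left nhdsWithin_le_nhds) hev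
  norm_num at this
  linarith

theorem le_re_of_forall_ne_zero {a : ℝ} {p : ℂ → ℂ} (hp : ContinuousOn p (ball 0 1))
    (hp_re : ∀ z ∈ ball (0 : ℂ) 1, z ≠ 0 → a ≤ (p z).re) :
    ∀ z ∈ ball (0 : ℂ) 1, a ≤ (p z).re := by
  intro z hz
  rcases eq_or_ne z 0 with rfl | hz0
  · refine ge_of_tendsto ((continuous_re.tendsto _).comp
      ((hp.continuousAt (ball_mem_nhds 0 one_pos)).tendsto.mono_left
        (nhdsWithin_le_nhds (s := {0}ᶜ)))) ?_
    filter_upwards [nhdsWithin_le_nhds (ball_mem_nhds (0 : ℂ) one_pos), self_mem_nhdsWithin]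
      with w hw hw0
    exact hp_re w hw hw0
  · exact hp_re z hz hz0

section Slice

variable {X : Type*} [NormedAddCommGroup X] [NormedSpace ℂ X]

theorem conj_smul_mem_suppFun {x : X} {φ : X →L[ℂ] ℂ} (hφ : φ ∈ suppFun x) (ζ : ℂ) :
    conj ζ • φ ∈ suppFun (ζ • x) := by
  refine ⟨?_, ?_⟩
  · simp only [_root_.smul_apply, map_smul, smul_eq_mul, hφ.1, norm_smul]
    rw [← mul_assoc, mul_conj']
    push_cast
    ring
  · rw [norm_smul, norm_smul, RCLike.norm_conj, hφ.2]

theorem exists_eq_smul_of_mem_suppFun {x : X} {φ : X →L[ℂ] ℂ} (hx : x ≠ 0)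
    (hφ : φ ∈ suppFun x) :
    ∃ u : X, ‖u‖ = 1 ∧ ∃ ψ ∈ suppFun u, ∃ ζ : ℂ, x = ζ • u ∧ φ = conj ζ • ψ := by
  have hζ : (‖x‖ : ℂ) ≠ 0 := ofReal_ne_zero.mpr (norm_ne_zero_iff.mpr hx)
  refine ⟨(‖x‖ : ℂ)⁻¹ • x, ?_, _, conj_smul_mem_suppFun hφ (‖x‖ : ℂ)⁻¹, ‖x‖, ?_, ?_⟩
  · rw [norm_smul, norm_inv, norm_real, Real.norm_of_nonneg (norm_nonneg x),
      inv_mul_cancel₀ (norm_ne_zero_iff.mpr hx)]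
  · rw [smul_inv_smul₀ hζ]
  · rw [map_inv₀, smul_inv_smul₀ ((map_ne_zero _).mpr hζ)]

/-- `ζ ↦ ψ (f (ζ • u)) / ζ`, which is holomorphic also at `0` when `f 0 = 0`. -/
noncomputable def slice (f : X → X) (u : X) (ψ : X →L[ℂ] ℂ) : ℂ → ℂ :=
  dslope (fun ζ : ℂ => ψ (f (ζ • u))) 0

variable {f : X → X} {u : X}

theorem smul_mem_ball_of_norm_eq_one (hu : ‖u‖ = 1) {ζ : ℂ} (hζ : ζ ∈ ball (0 : ℂ) 1) :
    ζ • u ∈ ball (0 : X) 1 := by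
  simpa [norm_smul, hu] using hζ

theorem differentiableOn_slice (hf : DifferentiableOn ℂ f (ball 0 1)) (hu : ‖u‖ = 1)
    (ψ : X →L[ℂ] ℂ) : DifferentiableOn ℂ (slice f u ψ) (ball 0 1) :=
  (Complex.differentiableOn_dslope (ball_mem_nhds 0 one_pos)).mpr <|
    ψ.differentiable.comp_differentiableOn <|
      hf.comp (differentiable_id.smul_const u).differentiableOn
        fun _ => smul_mem_ball_of_norm_eq_one hu

theorem mul_slice (hf0 : f 0 = 0) (ψ : X →L[ℂ] ℂ) (ζ : ℂ) :
    ζ * slice f u ψ ζ = ψ (f (ζ • u)) := by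
  simpa [slice, hf0] using sub_smul_dslope (fun ζ : ℂ => ψ (f (ζ • u))) 0 ζ

theorem apply_fderiv_eq_slice_add (hf : DifferentiableOn ℂ f (ball 0 1)) (hf0 : f 0 = 0)
    (hu : ‖u‖ = 1) (ψ : X →L[ℂ] ℂ) {ζ : ℂ} (hζ : ζ ∈ ball (0 : ℂ) 1) :
    ψ (fderiv ℂ f (ζ • u) u) = slice f u ψ ζ + ζ * deriv (slice f u ψ) ζ := by
  have hchain : HasDerivAt (fun ξ : ℂ => ψ (f (ξ • u))) (ψ (fderiv ℂ f (ζ • u) u)) ζ := by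
    have hfd := (hf.differentiableAt (isOpen_ball.mem_nhds
      (smul_mem_ball_of_norm_eq_one hu hζ))).hasFDerivAt
    exact ψ.hasFDerivAt.comp_hasDerivAt ζ
      (hfd.comp_hasDerivAt ζ (by simpa using (hasDerivAt_id ζ).smul_const u))
  have hp := ((differentiableOn_slice hf hu ψ).differentiableAt
    (isOpen_ball.mem_nhds hζ)).hasDerivAt
  have hprod : HasDerivAt (fun ξ : ℂ => ψ (f (ξ • u)))
      (slice f u ψ ζ + ζ * deriv (slice f u ψ) ζ) ζ := by
    simp_rw [← mul_slice hf0 ψ]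
    exact ((hasDerivAt_id' ζ).mul hp).congr_deriv (by simp)
  exact hchain.unique hprod

theorem le_re_conj_smul_apply_iff (hf0 : f 0 = 0) (hu : ‖u‖ = 1) (ψ : X →L[ℂ] ℂ) (a : ℝ)
    {ζ : ℂ} (hζ : ζ ≠ 0) :
    a * ‖ζ • u‖ ^ 2 ≤ ((conj ζ • ψ) (f (ζ • u))).re ↔ a ≤ (slice f u ψ ζ).re := by
  rw [_root_.smul_apply, smul_eq_mul, ← mul_slice hf0, ← mul_assoc, conj_mul',
    ← ofReal_pow, re_ofReal_mul, norm_smul, hu, mul_one, mul_comm a]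
  exact mul_le_mul_iff_right₀ (by positivity)

theorem le_re_two_mul_add_iff (hf : DifferentiableOn ℂ f (ball 0 1)) (hf0 : f 0 = 0)
    (hu : ‖u‖ = 1) (ψ : X →L[ℂ] ℂ) (a : ℝ) {ζ : ℂ} (hζ : ζ ∈ ball (0 : ℂ) 1) (hζ0 : ζ ≠ 0) :
    a * ‖ζ • u‖ ^ 2 * (1 + ‖ζ • u‖ ^ 2) ≤ (2 * (conj ζ • ψ) (f (ζ • u)) +
        (1 - (‖ζ • u‖ : ℂ) ^ 2) * (conj ζ • ψ) (fderiv ℂ f (ζ • u) (ζ • u))).re ↔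
      a * (1 + ‖ζ‖ ^ 2) ≤ (3 - ‖ζ‖ ^ 2) * (slice f u ψ ζ).re +
        (1 - ‖ζ‖ ^ 2) * (ζ * deriv (slice f u ψ) ζ).re := by
  have hexpand : 2 * (conj ζ • ψ) (f (ζ • u)) +
      (1 - (‖ζ • u‖ : ℂ) ^ 2) * (conj ζ • ψ) (fderiv ℂ f (ζ • u) (ζ • u)) =
      ((‖ζ‖ ^ 2 : ℝ) : ℂ) * ((((3 - ‖ζ‖ ^ 2 : ℝ)) : ℂ) * slice f u ψ ζ +
        ((1 - ‖ζ‖ ^ 2 : ℝ) : ℂ) * (ζ * deriv (slice f u ψ) ζ)) := by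
    simp only [_root_.smul_apply, smul_eq_mul, map_smul,
      apply_fderiv_eq_slice_add hf hf0 hu ψ hζ, ← mul_slice hf0 ψ, norm_smul, hu, mul_one]
    have := conj_mul' ζ
    push_cast
    linear_combination (2 * slice f u ψ ζ +
      (1 - (‖ζ‖ : ℂ) ^ 2) * (slice f u ψ ζ + ζ * deriv (slice f u ψ) ζ)) * this
  rw [hexpand, re_ofReal_mul, add_re, re_ofReal_mul, re_ofReal_mul, norm_smul, hu, mul_one,
    mul_comm a, mul_assoc]
  exact mul_le_mul_iff_right₀ (by positivity)

end Slice

/-- Proposition 2.4 (equivalence of (i) and (iv)). -/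
theorem stmt_1 {X : Type*} [NormedAddCommGroup X] [NormedSpace ℂ X]
    (a : ℝ) (ha : 0 ≤ a) (f : X → X)
    (hf : DifferentiableOn ℂ f (ball 0 1)) (hf0 : f 0 = 0) :
    (∀ x ∈ ball (0 : X) 1, ∀ φ ∈ suppFun x, a * ‖x‖ ^ 2 ≤ (φ (f x)).re) ↔
    (∀ x ∈ ball (0 : X) 1, ∀ φ ∈ suppFun x,
      a * ‖x‖ ^ 2 * (1 + ‖x‖ ^ 2) ≤
        (2 * φ (f x) + (1 - (‖x‖ : ℂ) ^ 2) * φ (fderiv ℂ f x x)).re) := by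
  constructor
  · intro h x hx φ hφ
    rcases eq_or_ne x 0 with rfl | hx0
    · simp [hf0]
    obtain ⟨u, hu, ψ, hψ, ζ, rfl, rfl⟩ := exists_eq_smul_of_mem_suppFun hx0 hφ
    have hζ : ζ ∈ ball (0 : ℂ) 1 := by simpa [norm_smul, hu] using hx
    have hp := differentiableOn_slice hf hu ψ
    rw [le_re_two_mul_add_iff hf hf0 hu ψ a hζ (left_ne_zero_of_smul hx0)]
    refine mul_one_add_sq_le_of_le_re ha hp (le_re_of_forall_ne_zero hp.continuousOn
      fun ξ hξ hξ0 => ?_) hζ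
    exact (le_re_conj_smul_apply_iff hf0 hu ψ a hξ0).mp
      (h _ (smul_mem_ball_of_norm_eq_one hu hξ) _ (conj_smul_mem_suppFun hψ ξ))
  · intro h x hx φ hφ
    rcases eq_or_ne x 0 with rfl | hx0
    · simp [hf0]
    obtain ⟨u, hu, ψ, hψ, ζ, rfl, rfl⟩ := exists_eq_smul_of_mem_suppFun hx0 hφ
    have hζ : ζ ∈ ball (0 : ℂ) 1 := by simpa [norm_smul, hu] using hx
    rw [le_re_conj_smul_apply_iff hf0 hu ψ a (left_ne_zero_of_smul hx0)]
    refine le_re_of_mul_one_add_sq_le (differentiableOn_slice hf hu ψ) (fun ξ hξ hξ0 => ?_) hζ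
    exact (le_re_two_mul_add_iff hf hf0 hu ψ a hξ hξ0).mp
      (h _ (smul_mem_ball_of_norm_eq_one hu hξ) _ (conj_smul_mem_suppFun hψ ξ))
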